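/- The weight of the topological space (X,τ) (the smallest cardinality of a base of τ) equals λ. -/

import Mathlib

universe u v

open Ordinal Set Topology Cardinal

namespace LawsonExample

def Xset (lam : Cardinal.{u}) : Set (Ordinal.{u} → Fin 3) :=
  {x | (∀ γ : Ordinal.{u}, lam.ord ≤ γ → x γ = 2) ∧ {γ : Ordinal.{u} | x γ ≠ 2}.Finite}

noncomputable def nrm (x : Ordinal.{u} → Fin 3) : Ordinal.{u} :=
  sInf {α | ∀ γ, α ≤ γ → x γ = 2}

noncomputable def Vnbhd (lam : Cardinal.{u}) (x : ↥(Xset lam)) (α : Ordinal.{u}) :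
    Set ↥(Xset lam) :=
  if x.1 0 = 2 then {x}
  else if x.1 0 = 1 then
    {y | (∀ γ, 1 ≤ γ → γ < α → y.1 γ = x.1 γ) ∧
         (∀ γ, α ≤ γ → γ < lam.ord → y.1 γ ≠ 1) ∧
         (y.1 0 = 1 ∨ (y.1 0 = 2 ∧ α < nrm y.1))}
  else
    {y | (∀ γ, 1 ≤ γ → γ < α → y.1 γ = x.1 γ) ∧
         (y.1 0 = 0 ∨ (y.1 0 = 2 ∧ α < nrm y.1 ∧ y.1 (Ordinal.pred (nrm y.1)) = 1))}

def tauSet (lam : Cardinal.{u}) : Set (Set ↥(Xset lam)) :=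
  {U | ∀ x ∈ U, ∃ α : Ordinal.{u}, nrm x.1 ≤ α ∧ α < lam.ord ∧ Vnbhd lam x α ⊆ U}

lemma nrm_spec {lam : Cardinal.{u}} (x : ↥(Xset lam)) {γ : Ordinal.{u}}
    (h : nrm x.1 ≤ γ) : x.1 γ = 2 := by
  have hne : {α : Ordinal.{u} | ∀ γ, α ≤ γ → x.1 γ = 2}.Nonempty :=
    ⟨lam.ord, fun γ hγ => x.2.1 γ hγ⟩
  exact csInf_mem hne γ h

lemma nrm_lt {lam : Cardinal.{u}} (hlam : ℵ₀ ≤ lam) (x : ↥(Xset lam)) :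
    nrm x.1 < lam.ord := by
  have hlim : Order.IsSuccLimit lam.ord := Cardinal.isSuccLimit_ord hlam
  rcases eq_empty_or_nonempty {γ | x.1 γ ≠ 2} with he | hne
  · have h0 : nrm x.1 ≤ 0 := csInf_le' (fun γ _ => by
      by_contra hc
      exact (eq_empty_iff_forall_notMem.1 he γ) hc)
    exact lt_of_le_of_lt h0 hlim.pos
  · set m := sSup {γ | x.1 γ ≠ 2} with hm_def
    have hmem : m ∈ {γ | x.1 γ ≠ 2} := hne.csSup_mem x.2.2
    have hm : m < lam.ord := lt_of_not_ge fun h => hmem (x.2.1 m h)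
    have hb : nrm x.1 ≤ m + 1 := csInf_le' (fun γ hγ => by
      by_contra hc
      have hle : γ ≤ m := le_csSup x.2.2.bddAbove hc
      rw [Ordinal.add_one_eq_succ] at hγ
      exact absurd hγ (not_le.2 (lt_of_le_of_lt hle (Order.lt_succ m))))
    have : m + 1 < lam.ord := by
      rw [Ordinal.add_one_eq_succ]; exact hlim.succ_lt hm
    exact lt_of_le_of_lt hb this

lemma fin3_cases (a : Fin 3) : a = 0 ∨ a = 1 ∨ a = 2 := by revert a; decide

lemma mem_Vnbhd_self {lam : Cardinal.{u}} (x : ↥(Xset lam)) {α : Ordinal.{u}}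
    (h : nrm x.1 ≤ α) : x ∈ Vnbhd lam x α := by
  rcases fin3_cases (x.1 0) with h0 | h0 | h0
  · have h2 : x.1 0 ≠ 2 := by rw [h0]; decide
    have h1 : x.1 0 ≠ 1 := by rw [h0]; decide
    rw [Vnbhd, if_neg h2, if_neg h1]
    exact ⟨fun γ _ _ => rfl, Or.inl h0⟩
  · have h2 : x.1 0 ≠ 2 := by rw [h0]; decide
    rw [Vnbhd, if_neg h2, if_pos h0]
    refine ⟨fun γ _ _ => rfl, fun γ hγ _ => ?_, Or.inl h0⟩
    rw [nrm_spec x (le_trans h hγ)]; decide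
  · rw [Vnbhd, if_pos h0]; exact rfl

lemma Vnbhd_mono {lam : Cardinal.{u}} (x : ↥(Xset lam)) {α β : Ordinal.{u}}
    (hα : nrm x.1 ≤ α) (hαβ : α ≤ β) : Vnbhd lam x β ⊆ Vnbhd lam x α := by
  rcases fin3_cases (x.1 0) with h0 | h0 | h0
  · have h2 : x.1 0 ≠ 2 := by rw [h0]; decide
    have h1 : x.1 0 ≠ 1 := by rw [h0]; decide
    rw [Vnbhd, Vnbhd, if_neg h2, if_neg h1, if_neg h2, if_neg h1]
    rintro y ⟨hr, hy⟩
    refine ⟨fun γ h1γ h2γ => hr γ h1γ (lt_of_lt_of_le h2γ hαβ), ?_⟩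
    rcases hy with hy | ⟨hy2, hylt, hyp⟩
    · exact Or.inl hy
    · exact Or.inr ⟨hy2, lt_of_le_of_lt hαβ hylt, hyp⟩
  · have h2 : x.1 0 ≠ 2 := by rw [h0]; decide
    rw [Vnbhd, Vnbhd, if_neg h2, if_pos h0, if_neg h2, if_pos h0]
    rintro y ⟨hr, hns, hy⟩
    have hα1 : 1 ≤ α := by
      by_contra hc
      have : α = 0 := Ordinal.lt_one_iff_zero.1 (not_le.1 hc)
      have : x.1 0 = 2 := nrm_spec x (by rw [← this]; exact hα)
      exact h2 this
    refine ⟨fun γ h1γ h2γ => hr γ h1γ (lt_of_lt_of_le h2γ hαβ), ?_, ?_⟩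
    · intro γ hγ hγlt
      by_cases hγβ : β ≤ γ
      · exact hns γ hγβ hγlt
      · have h1γ : 1 ≤ γ := le_trans hα1 hγ
        rw [hr γ h1γ (not_le.1 hγβ)]
        rw [nrm_spec x (le_trans hα hγ)]
        decide
    · rcases hy with hy | ⟨hy2, hylt⟩
      · exact Or.inl hy
      · exact Or.inr ⟨hy2, lt_of_le_of_lt hαβ hylt⟩
  · rw [Vnbhd, Vnbhd, if_pos h0, if_pos h0]

noncomputable def tau (lam : Cardinal.{u}) (hlam : ℵ₀ ≤ lam) :
    TopologicalSpace ↥(Xset lam) where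
  IsOpen U := U ∈ tauSet lam
  isOpen_univ := fun x _ =>
    ⟨nrm x.1, le_rfl, nrm_lt hlam x, subset_univ _⟩
  isOpen_inter := by
    intro U V hU hV x hx
    obtain ⟨α, hα1, hα2, hα3⟩ := hU x hx.1
    obtain ⟨β, hβ1, hβ2, hβ3⟩ := hV x hx.2
    refine ⟨max α β, le_trans hα1 (le_max_left _ _), max_lt hα2 hβ2, fun y hy => ?_⟩
    exact ⟨hα3 (Vnbhd_mono x hα1 (le_max_left _ _) hy),
           hβ3 (Vnbhd_mono x hβ1 (le_max_right _ _) hy)⟩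
  isOpen_sUnion := by
    intro S hS x hx
    obtain ⟨U, hU, hxU⟩ := hx
    obtain ⟨α, hα1, hα2, hα3⟩ := hS U hU x hxU
    exact ⟨α, hα1, hα2, fun y hy => ⟨U, hU, hα3 hy⟩⟩


/-- The semilattice operation of `X`: pointwise minimum. -/
noncomputable def pmin (lam : Cardinal.{u}) (x y : ↥(Xset lam)) : ↥(Xset lam) :=
  ⟨fun γ => min (x.1 γ) (y.1 γ), by
    constructor
    · intro γ hγ
      show min (x.1 γ) (y.1 γ) = 2
      rw [x.2.1 γ hγ, y.2.1 γ hγ, min_self]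
    · refine (x.2.2.union y.2.2).subset fun γ hγ => ?_
      have hγ' : min (x.1 γ) (y.1 γ) ≠ 2 := hγ
      simp only [mem_union, mem_setOf_eq]
      by_contra hc
      push_neg at hc
      rw [hc.1, hc.2, min_self] at hγ'
      exact hγ' rfl⟩

/-- `B` is a base of the topology `t`: it consists of open sets, and every open set is a
union of members of `B`. -/
def IsBase {X : Type v} (t : TopologicalSpace X) (B : Set (Set X)) : Prop :=
  (∀ U ∈ B, IsOpen[t] U) ∧ ∀ U, IsOpen[t] U → ∃ S ⊆ B, U = ⋃₀ S

/-- The family `ℬ = {V_α(x) : x ∈ X, α ∈ [‖x‖, λ)}`. -/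
def Vfamily (lam : Cardinal.{u}) : Set (Set ↥(Xset lam)) :=
  {W | ∃ (x : ↥(Xset lam)) (α : Ordinal.{u}), nrm x.1 ≤ α ∧ α < lam.ord ∧ W = Vnbhd lam x α}

/-- The weight of a topological space: the smallest cardinality of a base of its topology. -/
noncomputable def weight {X : Type v} (t : TopologicalSpace X) : Cardinal.{v} :=
  sInf {c : Cardinal.{v} | ∃ B : Set (Set X), IsBase t B ∧ c = Cardinal.mk ↥B}

/-- The function `𝟎_β`, with `𝟎_β β = 0` and `𝟎_β γ = 2` for `γ ≠ β`. -/
noncomputable def zeroF (β : Ordinal.{u}) : Ordinal.{u} → Fin 3 :=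
  fun γ => if γ = β then 0 else 2

/-- The function `𝟏_β`, with `𝟏_β β = 1` and `𝟏_β γ = 2` for `γ ≠ β`. -/
noncomputable def oneF (β : Ordinal.{u}) : Ordinal.{u} → Fin 3 :=
  fun γ => if γ = β then 1 else 2

lemma zeroF_mem (lam : Cardinal.{u}) {β : Ordinal.{u}} (h : β < lam.ord) :
    zeroF β ∈ Xset lam := by
  constructor
  · intro γ hγ
    have hne : γ ≠ β := fun e => absurd h (not_lt.2 (e ▸ hγ))
    simp [zeroF, hne]
  · refine (finite_singleton β).subset fun γ hγ => ?_
    simp only [mem_setOf_eq, zeroF] at hγ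
    by_contra hc
    simp only [mem_singleton_iff] at hc
    rw [if_neg hc] at hγ
    exact hγ rfl

lemma oneF_mem (lam : Cardinal.{u}) {β : Ordinal.{u}} (h : β < lam.ord) :
    oneF β ∈ Xset lam := by
  constructor
  · intro γ hγ
    have hne : γ ≠ β := fun e => absurd h (not_lt.2 (e ▸ hγ))
    simp [oneF, hne]
  · refine (finite_singleton β).subset fun γ hγ => ?_
    simp only [mem_setOf_eq, oneF] at hγ
    by_contra hc
    simp only [mem_singleton_iff] at hc
    rw [if_neg hc] at hγ
    exact hγ rfl

/-- `𝟎_β` as an element of `X` (for `β < λ`). -/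
noncomputable def zeroE (lam : Cardinal.{u}) {β : Ordinal.{u}} (h : β < lam.ord) :
    ↥(Xset lam) := ⟨zeroF β, zeroF_mem lam h⟩

/-- `𝟏_β` as an element of `X` (for `β < λ`). -/
noncomputable def oneE (lam : Cardinal.{u}) {β : Ordinal.{u}} (h : β < lam.ord) :
    ↥(Xset lam) := ⟨oneF β, oneF_mem lam h⟩

/-!
Points of `X₂` are isolated, because `V_α(x) = {x}` there; so every base contains the `λ`
distinct singletons `{𝟏_{β+1}}`, `β < λ`. Conversely, `V_β(y) ⊆ V_α(x)` whenever
`y ∈ V_α(x)` and `α ≤ β`, so the sets `V_α(x)` are open and form a base, and there are at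
most `|X| · λ = λ` of them, `X` being a set of finitely supported functions on `λ`.
-/

section Weight

variable {X : Type v} {t : TopologicalSpace X}

lemma isBase_setOf_isOpen (t : TopologicalSpace X) : IsBase t {U | IsOpen[t] U} :=
  ⟨fun _ hU => hU, fun U hU => ⟨{U}, singleton_subset_iff.2 hU, (sUnion_singleton U).symm⟩⟩

lemma weight_le_mk {B : Set (Set X)} (hB : IsBase t B) : weight t ≤ #B :=
  csInf_le' ⟨B, hB, rfl⟩

lemma le_weight {c : Cardinal.{v}} (h : ∀ B, IsBase t B → c ≤ #B) : c ≤ weight t :=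
  le_csInf ⟨_, _, isBase_setOf_isOpen t, rfl⟩ fun _ ⟨B, hB, hc⟩ => hc ▸ h B hB

lemma singleton_mem_of_isBase {B : Set (Set X)} (hB : IsBase t B) {x : X}
    (hx : IsOpen[t] {x}) : {x} ∈ B := by
  obtain ⟨S, hSB, hS⟩ := hB.2 _ hx
  obtain ⟨W, hWS, hxW⟩ : x ∈ ⋃₀ S := hS ▸ mem_singleton x
  have hWx : W ⊆ {x} := hS ▸ subset_sUnion_of_mem hWS
  rw [← subset_singleton_iff_eq.1 hWx |>.resolve_left (nonempty_of_mem hxW).ne_empty]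
  exact hSB hWS

lemma mk_le_weight_of_isOpen_singleton {ι : Type v} {f : ι → X} (hf : Function.Injective f)
    (hopen : ∀ i, IsOpen[t] {f i}) : #ι ≤ weight t :=
  le_weight fun B hB =>
    mk_le_of_injective (f := fun i => (⟨{f i}, singleton_mem_of_isBase hB (hopen i)⟩ : B))
      fun _ _ h => hf (singleton_injective (congrArg Subtype.val h))

end Weight

lemma mk_finite_ne_two_le {α : Type v} [Infinite α] :
    #{f : α → Fin 3 // {a | f a ≠ 2}.Finite} ≤ #α := by
  -- `swap 0 2` moves the default value `2` to the `0` of `Finsupp`.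
  have hsupp : ∀ f : α → Fin 3, Function.support (Equiv.swap 0 2 ∘ f) = {a | f a ≠ 2} := by
    intro f; ext a
    simp [Equiv.swap_apply_eq_iff]
  let F : {f : α → Fin 3 // {a | f a ≠ 2}.Finite} → (α →₀ Fin 3) := fun f =>
    Finsupp.ofSupportFinite _ ((hsupp f.1).symm ▸ f.2)
  have hF : Function.Injective F := fun f g h =>
    Subtype.ext <| funext fun a => by
      simpa [F, Finsupp.ofSupportFinite_coe] using DFunLike.congr_fun h a
  calc _ ≤ #(α →₀ Fin 3) := mk_le_of_injective hF
    _ = #α := by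
      rw [mk_finsupp_lift_of_infinite, Cardinal.lift_uzero, mk_fin, Cardinal.lift_natCast,
        max_eq_left]
      exact natCast_lt_aleph0.le.trans (infinite_iff.1 ‹_›)

lemma mk_Iio_ord (lam : Cardinal.{u}) : #(Iio lam.ord) = lift.{u + 1} lam := by
  rw [Cardinal.mk_Iio_ordinal, card_ord]

lemma mk_Xset_le {lam : Cardinal.{u}} (hlam : ℵ₀ ≤ lam) :
    #(Xset lam) ≤ lift.{u + 1} lam := by
  have : Infinite (Iio lam.ord) := infinite_iff.2 (by simpa [mk_Iio_ord] using hlam)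
  let restrict : Xset lam → {f : Iio lam.ord → Fin 3 // {a | f a ≠ 2}.Finite} := fun x =>
    ⟨fun γ => x.1 γ, x.2.2.preimage Subtype.val_injective.injOn⟩
  have hinj : Function.Injective restrict := by
    intro x y h
    ext γ : 2
    by_cases hγ : γ < lam.ord
    · exact congrFun (congrArg Subtype.val h) ⟨γ, hγ⟩
    · rw [x.2.1 γ (not_lt.1 hγ), y.2.1 γ (not_lt.1 hγ)]
  exact (mk_le_of_injective hinj).trans (mk_finite_ne_two_le.trans (mk_Iio_ord lam).le)

section Topology

variable {lam : Cardinal.{u}} {x y : Xset lam} {α β : Ordinal.{u}}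

lemma Vnbhd_of_eq_two (hx : x.1 0 = 2) (α : Ordinal.{u}) : Vnbhd lam x α = {x} := by
  rw [Vnbhd, if_pos hx]

lemma Vnbhd_of_eq_one (hx : x.1 0 = 1) :
    Vnbhd lam x α =
      {y | (∀ γ, 1 ≤ γ → γ < α → y.1 γ = x.1 γ) ∧
           (∀ γ, α ≤ γ → γ < lam.ord → y.1 γ ≠ 1) ∧
           (y.1 0 = 1 ∨ (y.1 0 = 2 ∧ α < nrm y.1))} := by
  rw [Vnbhd, if_neg (by simp [hx]), if_pos hx]

lemma Vnbhd_of_eq_zero (hx : x.1 0 = 0) :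
    Vnbhd lam x α =
      {y | (∀ γ, 1 ≤ γ → γ < α → y.1 γ = x.1 γ) ∧
           (y.1 0 = 0 ∨ (y.1 0 = 2 ∧ α < nrm y.1 ∧ y.1 (Ordinal.pred (nrm y.1)) = 1))} := by
  rw [Vnbhd, if_neg (by simp [hx]), if_neg (by simp [hx])]

lemma one_le_nrm (hx : x.1 0 ≠ 2) : 1 ≤ nrm x.1 :=
  Order.one_le_iff_pos.2 (pos_iff_ne_zero.2 fun h => hx (nrm_spec x h.le))

lemma apply_zero_eq_of_mem_Vnbhd (hyx : y ∈ Vnbhd lam x α) (hy : y.1 0 ≠ 2) :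
    y.1 0 = x.1 0 := by
  rcases fin3_cases (x.1 0) with hx | hx | hx
  · rw [Vnbhd_of_eq_zero hx] at hyx
    exact hx ▸ hyx.2.resolve_right fun h => hy h.1
  · rw [Vnbhd_of_eq_one hx] at hyx
    exact hx ▸ hyx.2.2.resolve_right fun h => hy h.1
  · rw [Vnbhd_of_eq_two hx, mem_singleton_iff] at hyx
    rw [hyx]

lemma Vnbhd_subset_of_eq_zero (hαβ : α ≤ β) (hx : x.1 0 = 0) (hy : y.1 0 = 0)
    (hyx : y ∈ Vnbhd lam x α) : Vnbhd lam y β ⊆ Vnbhd lam x α := by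
  rw [Vnbhd_of_eq_zero hx] at hyx ⊢
  rw [Vnbhd_of_eq_zero hy]
  rintro z ⟨hzy, hz⟩
  exact ⟨fun γ h1 hγ => (hzy γ h1 (hγ.trans_le hαβ)).trans (hyx.1 γ h1 hγ),
    hz.imp_right fun ⟨h2, hlt, hlast⟩ => ⟨h2, hαβ.trans_lt hlt, hlast⟩⟩

lemma Vnbhd_subset_of_eq_one (hα : 1 ≤ α) (hαβ : α ≤ β) (hx : x.1 0 = 1) (hy : y.1 0 = 1)
    (hyx : y ∈ Vnbhd lam x α) : Vnbhd lam y β ⊆ Vnbhd lam x α := by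
  rw [Vnbhd_of_eq_one hx] at hyx ⊢
  rw [Vnbhd_of_eq_one hy]
  rintro z ⟨hzy, hzβ, hz⟩
  refine ⟨fun γ h1 hγ => (hzy γ h1 (hγ.trans_le hαβ)).trans (hyx.1 γ h1 hγ), ?_,
    hz.imp_right fun ⟨h2, hlt⟩ => ⟨h2, hαβ.trans_lt hlt⟩⟩
  intro γ hγ hγlt
  rcases lt_or_ge γ β with hγβ | hγβ
  · rw [hzy γ (hα.trans hγ) hγβ]
    exact hyx.2.1 γ hγ hγlt
  · exact hzβ γ hγβ hγlt

lemma Vnbhd_subset_of_mem (hα : nrm x.1 ≤ α) (hαβ : α ≤ β) (hyx : y ∈ Vnbhd lam x α) :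
    Vnbhd lam y β ⊆ Vnbhd lam x α := by
  rcases fin3_cases (y.1 0) with hy | hy | hy
  · have hx : x.1 0 = 0 := (apply_zero_eq_of_mem_Vnbhd hyx (by simp [hy])).symm.trans hy
    exact Vnbhd_subset_of_eq_zero hαβ hx hy hyx
  · have hx : x.1 0 = 1 := (apply_zero_eq_of_mem_Vnbhd hyx (by simp [hy])).symm.trans hy
    exact Vnbhd_subset_of_eq_one ((one_le_nrm (by simp [hx])).trans hα) hαβ hx hy hyx
  · rw [Vnbhd_of_eq_two hy]
    exact singleton_subset_iff.2 hyx

lemma isOpen_Vnbhd (hlam : ℵ₀ ≤ lam) (hα : nrm x.1 ≤ α) (hαlt : α < lam.ord) :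
    IsOpen[tau lam hlam] (Vnbhd lam x α) := fun y hy =>
  ⟨max α (nrm y.1), le_max_right _ _, max_lt hαlt (nrm_lt hlam y),
    Vnbhd_subset_of_mem hα (le_max_left _ _) hy⟩

lemma isOpen_singleton_of_eq_two (hlam : ℵ₀ ≤ lam) (hx : x.1 0 = 2) :
    IsOpen[tau lam hlam] {x} := by
  rw [← Vnbhd_of_eq_two hx (nrm x.1)]
  exact isOpen_Vnbhd hlam le_rfl (nrm_lt hlam x)

lemma isBase_Vfamily (hlam : ℵ₀ ≤ lam) : IsBase (tau lam hlam) (Vfamily lam) := by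
  refine ⟨?_, fun U hU => ⟨{W ∈ Vfamily lam | W ⊆ U}, fun W hW => hW.1, ?_⟩⟩
  · rintro _ ⟨x, α, hα, hαlt, rfl⟩
    exact isOpen_Vnbhd hlam hα hαlt
  · refine Subset.antisymm (fun x hx => ?_) (sUnion_subset fun W hW => hW.2)
    obtain ⟨α, hα, hαlt, hVU⟩ := hU x hx
    exact ⟨_, ⟨⟨x, α, hα, hαlt, rfl⟩, hVU⟩, mem_Vnbhd_self x hα⟩

lemma mk_Vfamily_le (hlam : ℵ₀ ≤ lam) : #(Vfamily lam) ≤ lift.{u + 1} lam := by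
  have hsub : Vfamily lam ⊆ range fun p : Xset lam × Iio lam.ord => Vnbhd lam p.1 p.2 := by
    rintro _ ⟨x, α, -, hαlt, rfl⟩
    exact ⟨(x, ⟨α, hαlt⟩), rfl⟩
  calc #(Vfamily lam) ≤ #(Xset lam × Iio lam.ord) := (mk_le_mk_of_subset hsub).trans mk_range_le
    _ = #(Xset lam) * #(Iio lam.ord) := by rw [mk_prod, Cardinal.lift_id, Cardinal.lift_id]
    _ ≤ lift.{u + 1} lam * lift.{u + 1} lam := mul_le_mul' (mk_Xset_le hlam) (mk_Iio_ord lam).le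
    _ = lift.{u + 1} lam := mul_eq_self (by simpa using hlam)

end Topology

lemma oneF_injective : Function.Injective oneF := fun β β' h => by
  by_contra hne
  simpa [oneF, hne] using congrFun h β

/-- **Claim 4.** The weight of the topological space `(X, τ)` — the smallest
cardinality of a base of `τ` — equals `λ`. -/
theorem weight_tau (lam : Cardinal.{u}) (hlam : ℵ₀ ≤ lam) :
    weight (tau lam hlam) = Cardinal.lift.{u + 1} lam := by
  refine le_antisymm ((weight_le_mk (isBase_Vfamily hlam)).trans (mk_Vfamily_le hlam)) ?_
  have hsucc : ∀ β : Iio lam.ord, Order.succ β.1 < lam.ord := fun β =>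
    (isSuccLimit_ord hlam).succ_lt β.2
  rw [← mk_Iio_ord]
  refine mk_le_weight_of_isOpen_singleton (f := fun β => oneE lam (hsucc β))
    (fun β β' h => Subtype.ext (Order.succ_injective (oneF_injective (congrArg Subtype.val h))))
    fun β => isOpen_singleton_of_eq_two hlam ?_
  exact if_neg (Order.succ_ne_bot β.1).symm

end LawsonExample
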